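/- Let V : ∂M → M̄ be an asynchronous stopping time, and define V₀(ξ) = 0 and, inductively, V_{n+1}(ξ) = Vₙ(ξ)·V(ξ − Vₙ(ξ)) if Vₙ(ξ) ∈ M, and V_{n+1}(ξ) = ξ if Vₙ(ξ) ∈ ∂M. Then every Vₙ is an asynchronous stopping time. -/

import Mathlib

open MeasureTheory Filter
open scoped ENNReal NNReal

namespace HeapPaper

variable {S : Type}

/-- Commutation pairs of words, generating the trace congruence. -/
def CommRel (I : S → S → Prop) (w₁ w₂ : FreeMonoid S) : Prop :=
  ∃ a b : S, I a b ∧ w₁ = FreeMonoid.of a * FreeMonoid.of b ∧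
    w₂ = FreeMonoid.of b * FreeMonoid.of a

/-- The congruence on the free monoid generated by the commutation of independent pieces. -/
def HeapCon (I : S → S → Prop) : Con (FreeMonoid S) := conGen (CommRel I)

/-- The heap monoid `M(Σ, I)`:  the presented monoid `⟨Σ | ab = ba, (a,b) ∈ I⟩`. -/
def Heap (I : S → S → Prop) := (HeapCon I).Quotient

instance (I : S → S → Prop) : Monoid (Heap I) :=
  inferInstanceAs (Monoid (HeapCon I).Quotient)

/-- The unique additive extension to heaps of a function `φ` defined on pieces. -/
def addExt {A : Type} [AddCommMonoid A] {I : S → S → Prop} (φ : S → A) : Heap I → A :=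
  fun x => Multiplicative.toAdd <|
    (Con.lift (HeapCon I) (FreeMonoid.lift fun a => Multiplicative.ofAdd (φ a))
      (Con.conGen_le.mpr (by
        rintro w₁ w₂ ⟨a, b, hab, rfl, rfl⟩
        exact (Con.ker_rel _).mpr (by simp [map_mul, mul_comm])))) x

/-- The length `|x|` of a heap: the common length of its representative words. -/
def len {I : S → S → Prop} (x : Heap I) : ℕ := addExt (fun _ => 1) x

/-- The number `|x|ₐ` of occurrences of the piece `a` in the heap `x`. -/
def occ {I : S → S → Prop} [DecidableEq S] (a : S) (x : Heap I) : ℕ :=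
  addExt (fun b => if b = a then 1 else 0) x

/-- The additive extension `⟨φ, x⟩` of a real-valued cost function. -/
def pairing {I : S → S → Prop} (φ : S → ℝ) (x : Heap I) : ℝ := addExt φ x

/-- The left-divisibility order on the heap monoid. -/
def hLe {I : S → S → Prop} (x y : Heap I) : Prop := ∃ z : Heap I, y = x * z

/-- Cliques: finite sets of pairwise independent pieces. -/
def Cl (I : S → S → Prop) := {s : Finset S // ∀ a ∈ s, ∀ b ∈ s, a ≠ b → I a b}

/-- The empty clique. -/
def emptyCl (I : S → S → Prop) : Cl I := ⟨∅, by simp⟩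

/-- The heap associated with a clique (product of its pieces, in any order). -/
def Cl.heap {I : S → S → Prop} (γ : Cl I) : Heap I :=
  γ.1.noncommProd (fun a => (HeapCon I).mk' (FreeMonoid.of a)) (by
    intro a ha b hb hab
    have hI : I a b := γ.2 a ha b hb hab
    show (HeapCon I).mk' (FreeMonoid.of a) * (HeapCon I).mk' (FreeMonoid.of b)
        = (HeapCon I).mk' (FreeMonoid.of b) * (HeapCon I).mk' (FreeMonoid.of a)
    rw [← map_mul, ← map_mul]
    exact (Con.eq _).mpr (ConGen.Rel.of _ _ ⟨a, b, hI, rfl, rfl⟩))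

/-- The Cartier–Foata move relation `γ → γ'` between cliques. -/
def Move {I : S → S → Prop} (γ γ' : Cl I) : Prop :=
  ∀ b ∈ γ'.1, ∃ a ∈ γ.1, ¬ I a b

/-- The boundary `∂M`: infinite admissible sequences of nonempty cliques. -/
def Bnd (I : S → S → Prop) :=
  {ξ : ℕ → Cl I // (∀ n, (ξ n).1.Nonempty) ∧ ∀ n, Move (ξ n) (ξ (n + 1))}

/-- `M̄ = M ∪ ∂M`. -/
def MB (I : S → S → Prop) := Heap I ⊕ Bnd I

/-- Partial products of a sequence of cliques. -/
def ppSeq {I : S → S → Prop} (c : ℕ → Cl I) (n : ℕ) : Heap I :=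
  ((List.range n).map fun i => (c i).heap).prod

/-- `c` is the Cartier–Foata decomposition of the heap `x`, padded with empty cliques:
`c` is admissible, eventually empty, with partial products eventually equal to `x`. -/
def CFprop (I : S → S → Prop) (c : ℕ → Cl I) (x : Heap I) : Prop :=
  (∀ n, Move (c n) (c (n + 1))) ∧
    ∃ N, ∀ n, N ≤ n → ppSeq c n = x ∧ c n = emptyCl I

/-- The (padded) Cartier–Foata decomposition of a heap. -/
noncomputable def cf (I : S → S → Prop) (x : Heap I) : ℕ → Cl I :=
  letI := Classical.propDecidable (∃ c, CFprop I c x)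
  if h : ∃ c, CFprop I c x then h.choose else fun _ => emptyCl I

/-- The Cartier–Foata sequence of an element of `M̄`. -/
noncomputable def seqOf {I : S → S → Prop} : MB I → ℕ → Cl I
  | .inl x => cf I x
  | .inr ξ => ξ.1

/-- Partial products of the Cartier–Foata sequence of an element of `M̄`. -/
noncomputable def pp {I : S → S → Prop} (ζ : MB I) (n : ℕ) : Heap I :=
  ppSeq (seqOf ζ) n

/-- The order on `M̄`: `ξ ≤ ξ'` iff `γ₁⋯γₙ ≤ γ'₁⋯γ'ₙ` in `M` for all `n`. -/
noncomputable def mLe {I : S → S → Prop} (ζ ζ' : MB I) : Prop :=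
  ∀ n : ℕ, hLe (pp ζ n) (pp ζ' n)

/-- The elementary cylinder `↑x ⊆ ∂M` of base `x ∈ M`. -/
noncomputable def cyl {I : S → S → Prop} (x : Heap I) : Set (Bnd I) :=
  {ξ : Bnd I | mLe (.inl x) (.inr ξ)}

/-- The σ-algebra `𝔉` on `∂M` generated by the elementary cylinders. -/
noncomputable def Fsa (I : S → S → Prop) : MeasurableSpace (Bnd I) :=
  MeasurableSpace.generateFrom {A : Set (Bnd I) | ∃ x : Heap I, A = cyl x}

noncomputable instance (I : S → S → Prop) : MeasurableSpace (Bnd I) := Fsa I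

/-- `ζ` is the least upper bound in `M̄` of the nondecreasing sequence `(x·γ₁⋯γₙ)ₙ`,
where `(γₙ)` is the Cartier–Foata sequence of `ξ`; this characterizes `x·ξ`. -/
noncomputable def IsConc {I : S → S → Prop} (x : Heap I) (ξ : Bnd I) (ζ : MB I) : Prop :=
  (∀ n : ℕ, mLe (.inl (x * pp (.inr ξ) n)) ζ) ∧
    ∀ η : MB I, (∀ n : ℕ, mLe (.inl (x * pp (.inr ξ) n)) η) → mLe ζ η

/-- The concatenation `x·ξ ∈ ∂M` of a heap `x` and an infinite heap `ξ`. -/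
noncomputable def concB {I : S → S → Prop} (x : Heap I) (ξ : Bnd I) : Bnd I :=
  letI := Classical.propDecidable (∃ ζ : Bnd I, IsConc x ξ (.inr ζ))
  if h : ∃ ζ : Bnd I, IsConc x ξ (.inr ζ) then h.choose else ξ

/-- The difference `ξ − x`: the unique `ζ ∈ ∂M` with `x·ζ = ξ` (junk value if none exists). -/
noncomputable def subB {I : S → S → Prop} (ξ : Bnd I) (x : Heap I) : Bnd I :=
  letI := Classical.propDecidable (∃ ζ : Bnd I, concB x ζ = ξ)
  if h : ∃ ζ : Bnd I, concB x ζ = ξ then h.choose else ξ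

/-- Asynchronous stopping time. -/
noncomputable def IsAST {I : S → S → Prop} (V : Bnd I → MB I) : Prop :=
  (∀ ξ : Bnd I, mLe (V ξ) (.inr ξ)) ∧
    ∀ (ξ ξ' : Bnd I) (x : Heap I), V ξ = .inl x → mLe (.inl x) (.inr ξ') → V ξ' = V ξ

/-- The shift operator `θ_V` associated with an AST `V` (junk: identity outside its domain). -/
noncomputable def shiftV {I : S → S → Prop} (V : Bnd I → MB I) (ξ : Bnd I) : Bnd I :=
  match V ξ with
  | .inl x => subB ξ x
  | .inr _ => ξ

/-- The σ-algebra `𝔉_V` generated by the cylinders of the finite values of `V`. -/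
noncomputable def astSA {I : S → S → Prop} (V : Bnd I → MB I) : MeasurableSpace (Bnd I) :=
  MeasurableSpace.generateFrom
    {A : Set (Bnd I) | ∃ x : Heap I, (∃ ξ : Bnd I, V ξ = .inl x) ∧ A = cyl x}

/-- The iterated sequence `(Vₙ)ₙ` of an AST `V`:  `V₀ = 0` and
`V_{n+1}(ξ) = Vₙ(ξ)·V(ξ − Vₙ(ξ))` if `Vₙ(ξ) ∈ M`, `V_{n+1}(ξ) = ξ` otherwise. -/
noncomputable def iter {I : S → S → Prop} (V : Bnd I → MB I) : ℕ → Bnd I → MB I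
  | 0, _ => .inl 1
  | n + 1, ξ =>
    match iter V n ξ with
    | .inl x =>
      match V (subB ξ x) with
      | .inl y => .inl (x * y)
      | .inr ζ => .inr (concB x ζ)
    | .inr _ => .inr ξ

/-- The increment `Δ_{n+1} = V ∘ θ_{Vₙ}` (junk value outside the domain of `θ_{Vₙ}`). -/
noncomputable def Delta {I : S → S → Prop} (V : Bnd I → MB I) (n : ℕ) (ξ : Bnd I) : MB I :=
  match iter V n ξ with
  | .inl x => V (subB ξ x)
  | .inr _ => .inr ξ

/-- The length of an element of `M̄`, with `|ξ| = ∞` for `ξ ∈ ∂M`. -/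
noncomputable def lenE {I : S → S → Prop} : MB I → ℝ≥0∞
  | .inl x => (len x : ℝ≥0∞)
  | .inr _ => ⊤

/-- `E|V| < ∞`. -/
noncomputable def EVfin {I : S → S → Prop} (P : Measure (Bnd I)) (V : Bnd I → MB I) : Prop :=
  ∫⁻ ξ, lenE (V ξ) ∂P < ⊤

/-- The AST `V` is exhaustive: it is `ℙ`-a.s. finite and `ℙ`-a.s. `ξ = ⋁ₙ Vₙ(ξ)`
(`ξ` is the least upper bound of its iterates). -/
noncomputable def Exhaustive {I : S → S → Prop} (P : Measure (Bnd I)) (V : Bnd I → MB I) : Prop :=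
  (∀ᵐ ξ ∂P, ∃ x : Heap I, V ξ = .inl x) ∧
    ∀ᵐ ξ ∂P, (∀ n : ℕ, mLe (iter V n ξ) (.inr ξ)) ∧
      ∀ ζ : MB I, (∀ n : ℕ, mLe (iter V n ξ) ζ) → mLe (.inr ξ) ζ

/-- `ℙ` is a Bernoulli measure: a probability measure on `(∂M, 𝔉)` that is multiplicative
and positive on elementary cylinders. -/
noncomputable def IsBernoulli {I : S → S → Prop} (P : Measure (Bnd I)) : Prop :=
  IsProbabilityMeasure P ∧
    (∀ x y : Heap I, P (cyl (x * y)) = P (cyl x) * P (cyl y)) ∧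
    ∀ x : Heap I, 0 < P (cyl x)

/-- `ζ` is the greatest lower bound, within the complete lattice `L(ξ)`, of the set
`Hₐ(ξ)` of finite subheaps of `ξ` containing an occurrence of `a`:  this characterizes
the first hitting time of `a`. -/
noncomputable def IsHit {I : S → S → Prop} [DecidableEq S] (a : S) (ξ : Bnd I) (ζ : MB I) :
    Prop :=
  mLe ζ (.inr ξ) ∧
    (∀ x : Heap I, mLe (.inl x) (.inr ξ) → 0 < occ a x → mLe ζ (.inl x)) ∧
    ∀ η : MB I, mLe η (.inr ξ) →
      (∀ x : Heap I, mLe (.inl x) (.inr ξ) → 0 < occ a x → mLe η (.inl x)) → mLe η ζ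

/-- The first hitting time of the piece `a`. -/
noncomputable def hit {I : S → S → Prop} [DecidableEq S] (a : S) (ξ : Bnd I) : MB I :=
  letI := Classical.propDecidable (∃ ζ : MB I, IsHit a ξ ζ)
  if h : ∃ ζ : MB I, IsHit a ξ ζ then h.choose else .inr ξ

/-- A maximal clique: a maximal element of `(𝒞, ≤)`. -/
noncomputable def IsMaxCl {I : S → S → Prop} (γ : Cl I) : Prop :=
  ∀ δ : Cl I, hLe γ.heap δ.heap → δ.heap = γ.heap

/-- The AST cutting an infinite heap at the first occurrence of a maximal clique. -/
noncomputable def Vmax {I : S → S → Prop} (ξ : Bnd I) : MB I :=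
  letI := Classical.propDecidable
  if h : ∃ k : ℕ, IsMaxCl (ξ.1 k) then .inl (ppSeq ξ.1 (Nat.find h + 1)) else .inr ξ

/-- The ergodic mean `⟨φ, x⟩ / |x|` (junk value `0` on infinite heaps). -/
noncomputable def ratioC {I : S → S → Prop} (φ : S → ℝ) : MB I → ℝ
  | .inl x => pairing φ x / (len x : ℝ)
  | .inr _ => 0

/-- The ratio `φ(x)/|x|` for `φ` defined on heaps (junk value `0` on infinite heaps). -/
noncomputable def ratioH {I : S → S → Prop} (φ : Heap I → ℝ) : MB I → ℝ
  | .inl x => φ x / (len x : ℝ)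
  | .inr _ => 0

/-- The set `ℭ` of nonempty cliques. -/
def NCl (I : S → S → Prop) := {γ : Cl I // γ.1.Nonempty}

instance [Fintype S] (I : S → S → Prop) : Finite (Cl I) :=
  inferInstanceAs (Finite {s : Finset S // ∀ a ∈ s, ∀ b ∈ s, a ≠ b → I a b})

instance [Fintype S] (I : S → S → Prop) : Finite (NCl I) :=
  inferInstanceAs (Finite {γ : Cl I // γ.1.Nonempty})

/-- The valuation `f(x) = ℙ(↑x)` associated with `ℙ`. -/
noncomputable def fval {I : S → S → Prop} (P : Measure (Bnd I)) (x : Heap I) : ℝ :=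
  (P (cyl x)).toReal

open Classical in
/-- The Möbius transform `h` of the valuation `f` associated with `ℙ`. -/
noncomputable def mobius {I : S → S → Prop} (P : Measure (Bnd I)) (γ : Cl I) : ℝ :=
  ∑ᶠ γ' : Cl I,
    if hLe γ.heap γ'.heap then (-1 : ℝ) ^ (γ'.1.card - γ.1.card) * fval P γ'.heap else 0

open Classical in
/-- The normalization `g(γ) = Σ_{γ'∈ℭ, γ→γ'} h(γ')`. -/
noncomputable def gnorm {I : S → S → Prop} (P : Measure (Bnd I)) (γ : Cl I) : ℝ :=
  ∑ᶠ γ' : Cl I, if γ'.1.Nonempty ∧ Move γ γ' then mobius P γ' else 0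

open Classical in
/-- The transition matrix of the Markov chain of cliques. -/
noncomputable def Pmat {I : S → S → Prop} (P : Measure (Bnd I)) (γ γ' : Cl I) : ℝ :=
  if Move γ γ' then mobius P γ' / gnorm P γ else 0

/-- `π` is a stationary probability distribution, carried by the nonempty cliques, of the
Markov chain of cliques. -/
noncomputable def IsStationary {I : S → S → Prop} (P : Measure (Bnd I)) (π : Cl I → ℝ) :
    Prop :=
  (∀ γ : Cl I, 0 ≤ π γ) ∧ (π (emptyCl I) = 0) ∧ (∑ᶠ γ : Cl I, π γ = 1) ∧
    ∀ γ' : Cl I, π γ' = ∑ᶠ γ : Cl I, π γ * Pmat P γ γ'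

open Classical in
/-- The nonnegative matrix `B` on `ℭ×ℭ`: `B_{γ,γ'} = f(γ')` if `γ → γ'`, else `0`. -/
noncomputable def Bmat {I : S → S → Prop} (P : Measure (Bnd I)) :
    Matrix (NCl I) (NCl I) ℝ :=
  fun γ γ' => if Move γ.1 γ'.1 then fval P γ'.1.heap else 0

/-- The spectral radius of `B` (as a complex matrix). -/
noncomputable def specRadB [Fintype S] {I : S → S → Prop} (P : Measure (Bnd I)) : ℝ≥0∞ :=
  letI : Fintype (NCl I) := Fintype.ofFinite _
  letI : DecidableEq (NCl I) := Classical.decEq _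
  spectralRadius ℂ ((Bmat P).map (algebraMap ℝ ℂ))

/-- The height `τ(x)` of a heap: the number of cliques in its Cartier–Foata decomposition. -/
noncomputable def height {I : S → S → Prop} (x : Heap I) : ℕ :=
  sInf {N : ℕ | ∀ n, N ≤ n → cf I x n = emptyCl I}

/-- The ratio `|x|/τ(x)` (junk value `0` on infinite heaps). -/
noncomputable def speedRatio {I : S → S → Prop} : MB I → ℝ
  | .inl x => (len x : ℝ) / (height x : ℝ)
  | .inr _ => 0

/-- `ψ ∘ θ_V` extended by `0` outside the domain of `θ_V`. -/
noncomputable def extShift {I : S → S → Prop} (V : Bnd I → MB I) (ψ : Bnd I → ℝ)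
    (η : Bnd I) : ℝ :=
  match V η with
  | .inl _ => ψ (shiftV V η)
  | .inr _ => 0


/-!
The proof is an induction on `n`, resting on two descriptions of the order of `M̄` (which is
defined levelwise through Cartier–Foata decompositions) in terms of divisibility in `M`:
`x ≤ ζ` iff `x` divides a finite prefix `ζ₁⋯ζₘ`, and `x ≤ y·ζ` iff `x` divides some `y·ζ₁⋯ζₘ`.
The first comes from the monotonicity of Cartier–Foata prefixes under divisibility, which is
proved from the trace-theoretic description of heaps (projection lemma, cancellativity,
extraction of minimal pieces). The second also needs an upper bound in `∂M` of the chain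
`(y·ζ₁⋯ζₘ)ₘ` whose prefixes are controlled by the chain; it is assembled from the Cartier–Foata
cliques of the chain, which stabilize level by level because `Σ` is finite.
Then `V_{n+1}(ξ) = Vₙ(ξ)·V(ξ − Vₙ(ξ)) ≤ ξ`, and if `V_{n+1}(ξ) = x·y ≤ ξ'`, the stopping
property of `Vₙ` gives `Vₙ(ξ') = x`, cancelling `x` gives `y ≤ ξ' − x`, and the stopping property
of `V` gives `V(ξ' − x) = y`.
-/

section Words

variable {I : S → S → Prop}

def Heap.ofList (I : S → S → Prop) (l : List S) : Heap I :=
  (HeapCon I).mk' (FreeMonoid.ofList l)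

lemma Heap.ofList_append (l m : List S) :
    Heap.ofList I (l ++ m) = Heap.ofList I l * Heap.ofList I m :=
  map_mul (HeapCon I).mk' (FreeMonoid.ofList l) (FreeMonoid.ofList m)

lemma Heap.ofList_nil : Heap.ofList I [] = 1 := map_one _

lemma Heap.ofList_cons (a : S) (l : List S) :
    Heap.ofList I (a :: l) = Heap.ofList I [a] * Heap.ofList I l :=
  Heap.ofList_append [a] l

lemma Heap.exists_ofList (x : Heap I) : ∃ l, Heap.ofList I l = x := by
  obtain ⟨w, rfl⟩ := Con.mk'_surjective x
  exact ⟨FreeMonoid.toList w, rfl⟩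

lemma Heap.ofList_comm {a b : S} (h : I a b) :
    Heap.ofList I [a] * Heap.ofList I [b] = Heap.ofList I [b] * Heap.ofList I [a] := by
  simp only [← Heap.ofList_append]
  exact (Con.eq _).mpr (ConGen.Rel.of _ _ ⟨a, b, h, rfl, rfl⟩)

lemma Heap.ofList_append_cons {a : S} {p : List S} (hp : ∀ c ∈ p, I c a) (q : List S) :
    Heap.ofList I (p ++ a :: q) = Heap.ofList I (a :: (p ++ q)) := by
  induction p with
  | nil => rfl
  | cons c p ih =>
    rw [List.cons_append, Heap.ofList_cons c, ih fun d hd => hp d (.tail c hd),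
      Heap.ofList_cons a, ← mul_assoc, Heap.ofList_comm (hp c (.head p)), mul_assoc,
      ← Heap.ofList_cons c, ← Heap.ofList_cons a, List.cons_append]

lemma len_mul (x y : Heap I) : len (x * y) = len x + len y :=
  congrArg Multiplicative.toAdd (map_mul _ x y)

lemma len_ofList (l : List S) : len (Heap.ofList I l) = l.length := by
  unfold len addExt Heap.ofList
  erw [Con.lift_mk']
  simp [FreeMonoid.lift_apply]

lemma len_one : len (1 : Heap I) = 0 := by
  rw [← Heap.ofList_nil, len_ofList, List.length_nil]

lemma eq_one_of_len_eq_zero {x : Heap I} (h : len x = 0) : x = 1 := by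
  obtain ⟨l, rfl⟩ := Heap.exists_ofList x
  rw [len_ofList, List.length_eq_zero_iff] at h
  rw [h, Heap.ofList_nil]

lemma len_le_of_dvd {x y : Heap I} (h : x ∣ y) : len x ≤ len y := by
  obtain ⟨u, rfl⟩ := h
  simp [len_mul]

lemma eq_of_dvd_of_len_le {x y : Heap I} (h : x ∣ y) (hl : len y ≤ len x) : x = y := by
  obtain ⟨u, rfl⟩ := h
  rw [len_mul] at hl
  rw [eq_one_of_len_eq_zero (x := u) (by omega), mul_one]

lemma Heap.not_letter_dvd_one (a : S) : ¬ Heap.ofList I [a] ∣ 1 := fun h => by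
  simpa [len_ofList, len_one] using len_le_of_dvd h

end Words

section Projections

variable [DecidableEq S] {I : S → S → Prop}

def proj (a b : S) (l : List S) : List S := l.filter fun c => c = a ∨ c = b

lemma proj_append (a b : S) (l m : List S) : proj a b (l ++ m) = proj a b l ++ proj a b m :=
  List.filter_append ..

lemma proj_cons (a b c : S) (l : List S) :
    proj a b (c :: l) = if c = a ∨ c = b then c :: proj a b l else proj a b l := by
  by_cases h : c = a ∨ c = b <;> simp [proj, h]

variable [Std.Irrefl I]

lemma exists_split_of_proj_eq_cons {l v : List S} {a : S}
    (h : ∀ c d, ¬ I c d → proj c d l = proj c d (a :: v)) :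
    ∃ p q, l = p ++ a :: q ∧ ∀ c ∈ p, I c a := by
  have ha : a ∈ l := by
    have haa := h a a (Std.Irrefl.irrefl a)
    rw [proj_cons, if_pos (Or.inl rfl)] at haa
    exact List.mem_of_mem_filter (haa ▸ List.mem_cons_self : a ∈ proj a a l)
  obtain ⟨p, q, rfl, hap⟩ := List.eq_append_cons_of_mem ha
  refine ⟨p, q, rfl, fun c hc => by_contra fun hca => hap ?_⟩
  have hpq := h c a hca
  rw [proj_append, proj_cons, if_pos (Or.inr rfl), proj_cons, if_pos (Or.inr rfl)] at hpq
  rcases List.append_eq_cons_iff.mp hpq with ⟨hnil, -⟩ | ⟨r, hr, -⟩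
  · exact absurd hnil (List.ne_nil_of_mem (List.mem_filter_of_mem hc (by simp)))
  · exact List.mem_of_mem_filter (hr ▸ List.mem_cons_self)

variable [Std.Symm I]

lemma proj_eq_of_heapCon {w₁ w₂ : FreeMonoid S} (h : HeapCon I w₁ w₂) {a b : S} (hab : ¬ I a b) :
    proj a b w₁.toList = proj a b w₂.toList := by
  induction h with
  | of _ _ h =>
    obtain ⟨c, d, hcd, rfl, rfl⟩ := h
    have hne : c ≠ d := by rintro rfl; exact Std.Irrefl.irrefl c hcd
    show proj a b [c, d] = proj a b [d, c]
    by_cases hc : c = a ∨ c = b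
    · by_cases hd : d = a ∨ d = b
      · exfalso
        rcases hc with rfl | rfl <;> rcases hd with rfl | rfl
        exacts [hne rfl, hab hcd, hab (Std.Symm.symm _ _ hcd), hne rfl]
      · simp [proj_cons, hc, hd]
    · simp [proj_cons, hc]
  | refl => rfl
  | symm _ ih => exact ih.symm
  | trans _ _ ih₁ ih₂ => exact ih₁.trans ih₂
  | mul _ _ ih₁ ih₂ => simp only [FreeMonoid.toList_mul, proj_append, ih₁, ih₂]

/-- The projection lemma of trace theory. -/
lemma Heap.ofList_eq_ofList_iff {l m : List S} :
    Heap.ofList I l = Heap.ofList I m ↔ ∀ a b, ¬ I a b → proj a b l = proj a b m := by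
  refine ⟨fun h a b hab => proj_eq_of_heapCon ((Con.eq _).mp h) hab, fun h => ?_⟩
  induction l generalizing m with
  | nil =>
    cases m with
    | nil => rfl
    | cons c m => exact absurd (h c c (Std.Irrefl.irrefl c)) (by simp [proj])
  | cons a t ih =>
    obtain ⟨p, q, rfl, hp⟩ := exists_split_of_proj_eq_cons fun c d hcd => (h c d hcd).symm
    rw [Heap.ofList_append_cons hp, Heap.ofList_cons a t, Heap.ofList_cons a (p ++ q)]
    congr 1
    refine ih fun c d hcd => ?_
    have h' : proj c d (a :: t) = proj c d (a :: (p ++ q)) := (h c d hcd).trans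
      (proj_eq_of_heapCon ((Con.eq _).mp (Heap.ofList_append_cons hp q)) hcd)
    rw [proj_cons, proj_cons] at h'
    split_ifs at h'
    exacts [List.cons_injective h', h']

end Projections

section Letters

variable {I : S → S → Prop} [Std.Symm I] [Std.Irrefl I]

lemma Heap.mul_left_cancel {x y z : Heap I} (h : x * y = x * z) : y = z := by
  classical
  obtain ⟨l, rfl⟩ := Heap.exists_ofList x
  obtain ⟨m, rfl⟩ := Heap.exists_ofList y
  obtain ⟨n, rfl⟩ := Heap.exists_ofList z
  simp only [← Heap.ofList_append, Heap.ofList_eq_ofList_iff, proj_append] at h ⊢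
  exact fun a b hab => List.append_cancel_left (h a b hab)

lemma Heap.dvd_of_mul_dvd_mul_left {x y z : Heap I} (h : x * y ∣ x * z) : y ∣ z := by
  obtain ⟨u, hu⟩ := h
  exact ⟨u, Heap.mul_left_cancel (x := x) (by rw [hu, mul_assoc])⟩

lemma Heap.letter_dvd_ofList_iff {a : S} {l : List S} :
    Heap.ofList I [a] ∣ Heap.ofList I l ↔ ∃ p q, l = p ++ a :: q ∧ ∀ c ∈ p, I c a := by
  classical
  constructor
  · rintro ⟨z, hz⟩
    obtain ⟨v, rfl⟩ := Heap.exists_ofList z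
    rw [← Heap.ofList_cons, Heap.ofList_eq_ofList_iff] at hz
    exact exists_split_of_proj_eq_cons hz
  · rintro ⟨p, q, rfl, hp⟩
    rw [Heap.ofList_append_cons hp, Heap.ofList_cons a (p ++ q)]
    exact dvd_mul_right _ _

lemma Heap.letter_dvd_of_dvd_ofList_mul {a : S} {l : List S} (ha : a ∉ l) {y : Heap I}
    (h : Heap.ofList I [a] ∣ Heap.ofList I l * y) :
    (∀ b ∈ l, I a b) ∧ Heap.ofList I [a] ∣ y := by
  obtain ⟨v, rfl⟩ := Heap.exists_ofList y
  rw [← Heap.ofList_append, Heap.letter_dvd_ofList_iff] at h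
  obtain ⟨p, q, hpq, hp⟩ := h
  rcases List.append_eq_append_iff.mp hpq with ⟨r, rfl, rfl⟩ | ⟨_ | ⟨b, r⟩, rfl, hr⟩
  · refine ⟨fun b hb => Std.Symm.symm _ _ (hp b (List.mem_append_left _ hb)), ?_⟩
    exact Heap.letter_dvd_ofList_iff.mpr ⟨r, q, rfl, fun c hc => hp c (List.mem_append_right _ hc)⟩
  · rw [List.nil_append] at hr
    refine ⟨fun b hb => Std.Symm.symm _ _ (hp b (by simpa using hb)), ?_⟩
    rw [← hr, Heap.ofList_cons a q]
    exact dvd_mul_right _ _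
  · obtain ⟨rfl, -⟩ := List.cons_eq_cons.mp hr
    exact absurd (List.mem_append_right _ List.mem_cons_self) ha

end Letters
section Cliques

variable {I : S → S → Prop}

lemma Heap.ofList_eq_prod (l : List S) :
    Heap.ofList I l = (l.map fun a => (HeapCon I).mk' (FreeMonoid.of a)).prod := by
  induction l with
  | nil => rfl
  | cons a l ih => rw [Heap.ofList_cons, ih, List.map_cons, List.prod_cons]; rfl

lemma Cl.heap_eq_ofList (γ : Cl I) : γ.heap = Heap.ofList I γ.1.toList := by
  -- generalizing the multiset `γ.1.val` frees it from the commutativity proof of `noncommProd`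
  have key : ∀ m : Multiset S, m = γ.1.toList → ∀ comm,
      (m.map fun a => (HeapCon I).mk' (FreeMonoid.of a)).noncommProd comm =
        Heap.ofList I γ.1.toList := by
    rintro _ rfl _
    simp only [Multiset.map_coe, Multiset.noncommProd_coe, Heap.ofList_eq_prod]
  unfold Cl.heap Finset.noncommProd
  exact key _ (Finset.coe_toList _).symm _

lemma Cl.len_heap (γ : Cl I) : len γ.heap = γ.1.card := by
  rw [Cl.heap_eq_ofList, len_ofList, Finset.length_toList]

lemma Cl.heap_eq_one {γ : Cl I} (h : γ.1 = ∅) : γ.heap = 1 := by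
  rw [Cl.heap_eq_ofList, h, Finset.toList_empty, Heap.ofList_nil]

section Sdiff

variable [DecidableEq S]

def Cl.sdiff (δ γ : Cl I) : Cl I :=
  ⟨δ.1 \ γ.1, fun a ha b hb => δ.2 a (Finset.mem_sdiff.1 ha).1 b (Finset.mem_sdiff.1 hb).1⟩

lemma Cl.heap_eq_mul_sdiff {γ δ : Cl I} (h : γ.1 ⊆ δ.1) :
    δ.heap = γ.heap * (δ.sdiff γ).heap :=
  (Finset.noncommProd_congr (Finset.union_sdiff_of_subset h).symm (fun _ _ => rfl) _).trans
    (Finset.noncommProd_union_of_disjoint Finset.disjoint_sdiff _ _)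

end Sdiff

variable [Std.Symm I] [Std.Irrefl I]

lemma Cl.letter_dvd_heap {γ : Cl I} {a : S} (h : a ∈ γ.1) : Heap.ofList I [a] ∣ γ.heap := by
  obtain ⟨p, q, hpq, hap⟩ := List.eq_append_cons_of_mem (Finset.mem_toList.mpr h)
  rw [Cl.heap_eq_ofList, Heap.letter_dvd_ofList_iff]
  refine ⟨p, q, hpq, fun c hc => γ.2 c ?_ a h (ne_of_mem_of_not_mem hc hap)⟩
  exact Finset.mem_toList.mp (hpq ▸ List.mem_append_left _ hc)

lemma Cl.letter_dvd_of_dvd_heap_mul {γ : Cl I} {a : S} (ha : a ∉ γ.1) {y : Heap I}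
    (h : Heap.ofList I [a] ∣ γ.heap * y) : (∀ b ∈ γ.1, I a b) ∧ Heap.ofList I [a] ∣ y := by
  rw [Cl.heap_eq_ofList] at h
  simpa using Heap.letter_dvd_of_dvd_ofList_mul (by simpa using ha) h

lemma Cl.mem_iff_letter_dvd {γ : Cl I} {a : S} : a ∈ γ.1 ↔ Heap.ofList I [a] ∣ γ.heap := by
  refine ⟨Cl.letter_dvd_heap, fun h => by_contra fun ha => ?_⟩
  exact Heap.not_letter_dvd_one a (Cl.letter_dvd_of_dvd_heap_mul ha (by rwa [mul_one])).2

lemma Cl.heap_injective : Function.Injective (Cl.heap (I := I)) := fun γ δ h =>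
  Subtype.ext <| Finset.ext fun _ => by rw [Cl.mem_iff_letter_dvd, Cl.mem_iff_letter_dvd, h]

end Cliques

section PartialProducts

variable {I : S → S → Prop}

lemma ppSeq_zero (c : ℕ → Cl I) : ppSeq c 0 = 1 := rfl

lemma ppSeq_succ (c : ℕ → Cl I) (n : ℕ) : ppSeq c (n + 1) = ppSeq c n * (c n).heap := by
  simp [ppSeq, List.range_succ]

lemma ppSeq_succ' (c : ℕ → Cl I) (n : ℕ) :
    ppSeq c (n + 1) = (c 0).heap * ppSeq (fun i => c (i + 1)) n := by
  induction n with
  | zero => rw [ppSeq_succ, ppSeq_zero, ppSeq_zero, one_mul, mul_one]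
  | succ n ih => rw [ppSeq_succ, ih, ppSeq_succ, mul_assoc]

lemma ppSeq_dvd_ppSeq (c : ℕ → Cl I) {m n : ℕ} (h : m ≤ n) : ppSeq c m ∣ ppSeq c n := by
  induction n, h using Nat.le_induction with
  | base => exact dvd_rfl
  | succ n _ ih => rw [ppSeq_succ]; exact ih.mul_right _

lemma ppSeq_trunc (c : ℕ → Cl I) (m n : ℕ) :
    ppSeq (fun i => if i < m then c i else emptyCl I) n = ppSeq c (min n m) := by
  induction n with
  | zero => rfl
  | succ n ih =>
    rcases Nat.lt_or_ge n m with h | h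
    · rw [ppSeq_succ, ih, if_pos h, min_eq_left h.le, min_eq_left h, ppSeq_succ]
    · rw [ppSeq_succ, ih, if_neg (not_lt.2 h), min_eq_right h, min_eq_right (by omega),
        Cl.heap_eq_one rfl, mul_one]

lemma len_ppSeq_le [Fintype S] (c : ℕ → Cl I) (n : ℕ) : len (ppSeq c n) ≤ n * Fintype.card S := by
  induction n with
  | zero => simp [ppSeq_zero, len_one]
  | succ n ih =>
    rw [ppSeq_succ, len_mul, Cl.len_heap, add_mul, one_mul]
    exact add_le_add ih (Finset.card_le_univ _)

lemma le_len_ppSeq (ξ : Bnd I) (n : ℕ) : n ≤ len (ppSeq ξ.1 n) := by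
  induction n with
  | zero => exact Nat.zero_le _
  | succ n ih =>
    rw [ppSeq_succ, len_mul, Cl.len_heap]
    exact add_le_add ih (ξ.2.1 n).card_pos

end PartialProducts

section CartierFoata

variable {I : S → S → Prop}

lemma cf_spec (hCF : ∀ x : Heap I, ∃! c : ℕ → Cl I, CFprop I c x) (x : Heap I) :
    CFprop I (cf I x) x := by
  rw [cf, dif_pos (hCF x).exists]
  exact (hCF x).exists.choose_spec

lemma cf_eq (hCF : ∀ x : Heap I, ∃! c : ℕ → Cl I, CFprop I c x) {c : ℕ → Cl I} {x : Heap I}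
    (h : CFprop I c x) : cf I x = c :=
  (hCF x).unique (cf_spec hCF x) h

lemma ppSeq_cf_dvd (hCF : ∀ x : Heap I, ∃! c : ℕ → Cl I, CFprop I c x) (x : Heap I) (n : ℕ) :
    ppSeq (cf I x) n ∣ x := by
  obtain ⟨-, N, hN⟩ := cf_spec hCF x
  exact (ppSeq_dvd_ppSeq _ (le_max_left n N)).trans (hN _ (le_max_right n N)).1.dvd

lemma cf_ppSeq (hCF : ∀ x : Heap I, ∃! c : ℕ → Cl I, CFprop I c x) {c : ℕ → Cl I}
    (hc : ∀ n, Move (c n) (c (n + 1))) (m : ℕ) :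
    cf I (ppSeq c m) = fun i => if i < m then c i else emptyCl I := by
  refine cf_eq hCF ⟨fun n => ?_, m, fun n hn => ⟨?_, if_neg (by omega)⟩⟩
  · by_cases h : n + 1 < m
    · simpa [h, Nat.lt_of_succ_lt h] using hc n
    · simp only [h, if_false]
      exact fun b hb => absurd hb (Finset.notMem_empty b)
  · rw [ppSeq_trunc, min_eq_right hn]

lemma ppSeq_cf_ppSeq (hCF : ∀ x : Heap I, ∃! c : ℕ → Cl I, CFprop I c x) {c : ℕ → Cl I}
    (hc : ∀ n, Move (c n) (c (n + 1))) (m n : ℕ) :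
    ppSeq (cf I (ppSeq c m)) n = ppSeq c (min n m) := by
  rw [cf_ppSeq hCF hc, ppSeq_trunc]

lemma ppSeq_cf_of_eq_empty (hCF : ∀ x : Heap I, ∃! c : ℕ → Cl I, CFprop I c x) {x : Heap I}
    {k : ℕ} (h : (cf I x k).1 = ∅) : ppSeq (cf I x) k = x := by
  obtain ⟨hM, N, hN⟩ := cf_spec hCF x
  have hempty : ∀ i ≥ k, (cf I x i).1 = ∅ := by
    intro i hi
    induction i, hi using Nat.le_induction with
    | base => exact h
    | succ i _ ih =>
      refine Finset.eq_empty_of_forall_notMem fun b hb => ?_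
      obtain ⟨a, ha, -⟩ := hM i b hb
      simp [ih] at ha
  have hstable : ∀ i ≥ k, ppSeq (cf I x) i = ppSeq (cf I x) k := by
    intro i hi
    induction i, hi using Nat.le_induction with
    | base => rfl
    | succ i hi ih => rw [ppSeq_succ, Cl.heap_eq_one (hempty i hi), mul_one, ih]
  rw [← hstable _ (le_max_right N k), (hN _ (le_max_left N k)).1]

variable [Std.Symm I] [Std.Irrefl I]

lemma CFprop.tail {c : ℕ → Cl I} {x : Heap I} (h : CFprop I c x) :
    ∃ x', x = (c 0).heap * x' ∧ CFprop I (fun i => c (i + 1)) x' := by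
  obtain ⟨hM, N, hN⟩ := h
  have hx : x = (c 0).heap * ppSeq (fun i => c (i + 1)) N := by
    rw [← ppSeq_succ', (hN (N + 1) (by omega)).1]
  refine ⟨_, hx, fun n => hM (n + 1), N, fun n hn => ⟨?_, (hN (n + 1) (by omega)).2⟩⟩
  apply Heap.mul_left_cancel (x := (c 0).heap)
  rw [← ppSeq_succ', (hN (n + 1) (by omega)).1, hx]

lemma exists_cf_tail (hCF : ∀ x : Heap I, ∃! c : ℕ → Cl I, CFprop I c x) (x : Heap I) :
    ∃ x', x = (cf I x 0).heap * x' ∧ cf I x' = fun i => cf I x (i + 1) := by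
  obtain ⟨x', hx, htail⟩ := (cf_spec hCF x).tail
  exact ⟨x', hx, cf_eq hCF htail⟩

lemma mem_zero_of_letter_dvd_ppSeq {c : ℕ → Cl I} (hc : ∀ n, Move (c n) (c (n + 1))) {a : S}
    {m : ℕ} (h : Heap.ofList I [a] ∣ ppSeq c m) : a ∈ (c 0).1 := by
  induction m generalizing c with
  | zero => exact absurd h (Heap.not_letter_dvd_one a)
  | succ m ih =>
    rw [ppSeq_succ'] at h
    by_contra ha
    obtain ⟨hind, h'⟩ := Cl.letter_dvd_of_dvd_heap_mul ha h
    obtain ⟨b, hb, hdep⟩ := hc 0 a (ih (fun n => hc (n + 1)) h')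
    exact hdep (Std.Symm.symm _ _ (hind b hb))

lemma mem_cf_zero_iff (hCF : ∀ x : Heap I, ∃! c : ℕ → Cl I, CFprop I c x) {x : Heap I} {a : S} :
    a ∈ (cf I x 0).1 ↔ Heap.ofList I [a] ∣ x := by
  refine ⟨fun h => ?_, fun h => ?_⟩
  · obtain ⟨x', hx, -⟩ := exists_cf_tail hCF x
    exact (Cl.letter_dvd_heap h).trans ⟨x', hx⟩
  · obtain ⟨hM, N, hN⟩ := cf_spec hCF x
    rw [← (hN N le_rfl).1] at h
    exact mem_zero_of_letter_dvd_ppSeq hM h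

lemma cf_zero_subset_of_dvd (hCF : ∀ x : Heap I, ∃! c : ℕ → Cl I, CFprop I c x) {u w : Heap I}
    (h : u ∣ w) : (cf I u 0).1 ⊆ (cf I w 0).1 := fun _ ha =>
  (mem_cf_zero_iff hCF).2 (((mem_cf_zero_iff hCF).1 ha).trans h)

lemma ppSeq_cf_mul_dvd (hCF : ∀ x : Heap I, ∃! c : ℕ → Cl I, CFprop I c x) (n : ℕ) (γ : Cl I)
    (z : Heap I) : ppSeq (cf I (γ.heap * z)) n ∣ γ.heap * ppSeq (cf I z) n := by
  classical
  induction n generalizing γ z with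
  | zero => exact one_dvd _
  | succ n ih =>
    obtain ⟨w', hw, hw'⟩ := exists_cf_tail hCF (γ.heap * z)
    obtain ⟨z', hz, hz'⟩ := exists_cf_tail hCF z
    set δ := cf I (γ.heap * z) 0
    set δz := cf I z 0
    -- The first clique of `γ·z` is `γ` together with the pieces of the first clique of `z`
    -- that are independent of `γ`.
    have hγδ : γ.1 ⊆ δ.1 := fun a ha =>
      (mem_cf_zero_iff hCF).2 ((Cl.letter_dvd_heap ha).trans (dvd_mul_right _ _))
    have hεδz : (δ.sdiff γ).1 ⊆ δz.1 := fun a ha => by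
      obtain ⟨haδ, haγ⟩ := Finset.mem_sdiff.1 ha
      exact (mem_cf_zero_iff hCF).2
        (Cl.letter_dvd_of_dvd_heap_mul haγ ((mem_cf_zero_iff hCF).1 haδ)).2
    have hδ := Cl.heap_eq_mul_sdiff hγδ
    have hδz := Cl.heap_eq_mul_sdiff hεδz
    have hw'z' : w' = (δz.sdiff (δ.sdiff γ)).heap * z' := by
      apply Heap.mul_left_cancel (x := γ.heap * (δ.sdiff γ).heap)
      rw [← hδ, ← hw, hz, hδz, hδ]
      simp only [mul_assoc]
    rw [ppSeq_succ', ppSeq_succ', ← hw', ← hz', hδ, hδz, hw'z', mul_assoc, mul_assoc]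
    exact mul_dvd_mul_left _ (mul_dvd_mul_left _ (ih _ _))

lemma ppSeq_cf_dvd_ppSeq_cf (hCF : ∀ x : Heap I, ∃! c : ℕ → Cl I, CFprop I c x) (n : ℕ)
    {u w : Heap I} (h : u ∣ w) : ppSeq (cf I u) n ∣ ppSeq (cf I w) n := by
  classical
  induction n generalizing u w with
  | zero => exact dvd_rfl
  | succ n ih =>
    obtain ⟨u', hu, hu'⟩ := exists_cf_tail hCF u
    obtain ⟨w', hw, hw'⟩ := exists_cf_tail hCF w
    have hδ := Cl.heap_eq_mul_sdiff (cf_zero_subset_of_dvd hCF h)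
    obtain ⟨s, hs⟩ := h
    have hu'w' : u' ∣ ((cf I w 0).sdiff (cf I u 0)).heap * w' := by
      refine ⟨s, Heap.mul_left_cancel (x := (cf I u 0).heap) ?_⟩
      rw [← mul_assoc, ← hδ, ← hw, hs, ← mul_assoc, ← hu]
    rw [ppSeq_succ', ppSeq_succ', ← hu', ← hw', hδ, mul_assoc]
    exact mul_dvd_mul_left _ ((ih hu'w').trans (ppSeq_cf_mul_dvd hCF n _ w'))

end CartierFoata

section Order

variable {I : S → S → Prop}

lemma mLe_refl (ζ : MB I) : mLe ζ ζ := fun _ => dvd_rfl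

variable [Std.Symm I] [Std.Irrefl I]

lemma mLe_inl_of_dvd (hCF : ∀ x : Heap I, ∃! c : ℕ → Cl I, CFprop I c x) {u v : Heap I}
    (h : u ∣ v) {η : MB I} (hv : mLe (.inl v) η) : mLe (.inl u) η := fun n =>
  (ppSeq_cf_dvd_ppSeq_cf hCF n h).trans (hv n)

lemma mLe_inl_inr_iff (hCF : ∀ x : Heap I, ∃! c : ℕ → Cl I, CFprop I c x) {u : Heap I}
    {ζ : Bnd I} : mLe (.inl u) (.inr ζ) ↔ ∃ m, u ∣ ppSeq ζ.1 m := by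
  refine ⟨fun h => ?_, fun ⟨m, hm⟩ n => ?_⟩
  · obtain ⟨-, N, hN⟩ := cf_spec hCF u
    exact ⟨N, (hN N le_rfl).1 ▸ h N⟩
  · have h := ppSeq_cf_dvd_ppSeq_cf hCF n hm
    rw [ppSeq_cf_ppSeq hCF ζ.2.2] at h
    exact h.trans (ppSeq_dvd_ppSeq _ (min_le_left n m))

end Order

section Limit

variable {I : S → S → Prop}

lemma exists_eventually_eq_of_dvd_chain {v : ℕ → Heap I} (hv : ∀ m n, m ≤ n → v m ∣ v n)
    {B : ℕ} (hB : ∀ n, len (v n) ≤ B) : ∃ L, ∀ᶠ n in atTop, v n = L := by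
  have hbdd : BddAbove (Set.range fun n => len (v n)) := ⟨B, by rintro _ ⟨n, rfl⟩; exact hB n⟩
  obtain ⟨N, hN⟩ := Nat.sSup_mem (Set.range_nonempty _) hbdd
  refine ⟨v N, eventually_atTop.2 ⟨N, fun n hn => (eq_of_dvd_of_len_le (hv N n hn) ?_).symm⟩⟩
  exact (le_csSup hbdd ⟨n, rfl⟩).trans hN.ge

variable [Fintype S] [Std.Symm I] [Std.Irrefl I]

lemma exists_eventually_cf_eq (hCF : ∀ x : Heap I, ∃! c : ℕ → Cl I, CFprop I c x)
    {u : ℕ → Heap I} (hu : ∀ m n, m ≤ n → u m ∣ u n) (k : ℕ) :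
    ∃ γ : Cl I, ∀ᶠ n in atTop, cf I (u n) k = γ := by
  have hstab : ∀ k, ∃ L, ∀ᶠ n in atTop, ppSeq (cf I (u n)) k = L := fun k =>
    exists_eventually_eq_of_dvd_chain (fun m n h => ppSeq_cf_dvd_ppSeq_cf hCF k (hu m n h))
      (fun n => len_ppSeq_le _ k)
  obtain ⟨L, hL⟩ := hstab k
  obtain ⟨L', hL'⟩ := hstab (k + 1)
  obtain ⟨n₀, hn₀⟩ := (hL.and hL').exists
  refine ⟨cf I (u n₀) k, (hL.and hL').mono fun n hn => Cl.heap_injective ?_⟩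
  apply Heap.mul_left_cancel (x := L)
  calc L * (cf I (u n) k).heap = ppSeq (cf I (u n)) (k + 1) := by rw [ppSeq_succ, hn.1]
    _ = ppSeq (cf I (u n₀)) (k + 1) := hn.2.trans hn₀.2.symm
    _ = L * (cf I (u n₀) k).heap := by rw [ppSeq_succ, hn₀.1]

/-- The bound is made of the eventual values of the Cartier–Foata cliques of the chain. -/
lemma exists_bnd_of_chain (hCF : ∀ x : Heap I, ∃! c : ℕ → Cl I, CFprop I c x)
    {u : ℕ → Heap I} (hu : ∀ m n, m ≤ n → u m ∣ u n)
    (hlen : Tendsto (fun n => len (u n)) atTop atTop) :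
    ∃ ξ : Bnd I, (∀ n, mLe (.inl (u n)) (.inr ξ)) ∧ ∀ j, ∃ n, ppSeq ξ.1 j ∣ u n := by
  choose γ hγ using exists_eventually_cf_eq hCF hu
  have hpp : ∀ j, ∀ᶠ n in atTop, ppSeq (cf I (u n)) j = ppSeq γ j := by
    intro j
    induction j with
    | zero => exact Eventually.of_forall fun _ => rfl
    | succ j ih => exact (ih.and (hγ j)).mono fun n h => by rw [ppSeq_succ, ppSeq_succ, h.1, h.2]
  have hne : ∀ k, (γ k).1.Nonempty := by
    intro k
    rw [Finset.nonempty_iff_ne_empty]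
    intro hk
    obtain ⟨n, hn, hlarge⟩ := ((hγ k).and (hlen.eventually_gt_atTop (k * Fintype.card S))).exists
    have hun := ppSeq_cf_of_eq_empty hCF (hn ▸ hk : (cf I (u n) k).1 = ∅)
    exact absurd (hun ▸ len_ppSeq_le _ k) (not_le.2 hlarge)
  have hmove : ∀ k, Move (γ k) (γ (k + 1)) := by
    intro k
    obtain ⟨n, h₀, h₁⟩ := ((hγ k).and (hγ (k + 1))).exists
    exact h₀ ▸ h₁ ▸ (cf_spec hCF (u n)).1 k
  refine ⟨⟨γ, hne, hmove⟩, fun n j => ?_, fun j => ?_⟩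
  · obtain ⟨m, hm, hnm⟩ := ((hpp j).and (eventually_ge_atTop n)).exists
    exact (ppSeq_cf_dvd_ppSeq_cf hCF j (hu n m hnm)).trans hm.dvd
  · obtain ⟨n, hn⟩ := (hpp j).exists
    exact ⟨n, hn ▸ ppSeq_cf_dvd hCF (u n) j⟩

end Limit

section Concatenation

variable {I : S → S → Prop}

lemma isConc_concB (hconc : ∀ (x : Heap I) (ξ : Bnd I), ∃ ζ : Bnd I, IsConc x ξ (.inr ζ))
    (x : Heap I) (ζ : Bnd I) : IsConc x ζ (.inr (concB x ζ)) := by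
  rw [concB, dif_pos (hconc x ζ)]
  exact (hconc x ζ).choose_spec

lemma concB_subB (hsubEx : ∀ (x : Heap I) (ξ : Bnd I), ξ ∈ cyl x → ∃ ζ : Bnd I, concB x ζ = ξ)
    {x : Heap I} {ξ : Bnd I} (h : mLe (.inl x) (.inr ξ)) : concB x (subB ξ x) = ξ := by
  rw [subB, dif_pos (hsubEx x ξ h)]
  exact (hsubEx x ξ h).choose_spec

variable [Fintype S] [Std.Symm I] [Std.Irrefl I]

lemma exists_ppSeq_concB_dvd (hCF : ∀ x : Heap I, ∃! c : ℕ → Cl I, CFprop I c x)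
    (hconc : ∀ (x : Heap I) (ξ : Bnd I), ∃ ζ : Bnd I, IsConc x ξ (.inr ζ))
    (x : Heap I) (ζ : Bnd I) (j : ℕ) : ∃ m, ppSeq (concB x ζ).1 j ∣ x * ppSeq ζ.1 m := by
  have hlen : ∀ n, n ≤ len (x * ppSeq ζ.1 n) := fun n => by
    rw [len_mul]; exact (le_len_ppSeq ζ n).trans (Nat.le_add_left _ _)
  obtain ⟨ξ, hub, hdom⟩ := exists_bnd_of_chain hCF (u := fun n => x * ppSeq ζ.1 n)
    (fun m n h => mul_dvd_mul_left x (ppSeq_dvd_ppSeq _ h)) (tendsto_atTop_mono hlen tendsto_id)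
  obtain ⟨m, hm⟩ := hdom j
  exact ⟨m, dvd_trans ((isConc_concB hconc x ζ).2 _ hub j) hm⟩

lemma mLe_inl_concB_iff (hCF : ∀ x : Heap I, ∃! c : ℕ → Cl I, CFprop I c x)
    (hconc : ∀ (x : Heap I) (ξ : Bnd I), ∃ ζ : Bnd I, IsConc x ξ (.inr ζ))
    {u x : Heap I} {ζ : Bnd I} : mLe (.inl u) (.inr (concB x ζ)) ↔ ∃ m, u ∣ x * ppSeq ζ.1 m := by
  refine ⟨fun h => ?_, fun ⟨m, hm⟩ => mLe_inl_of_dvd hCF hm ((isConc_concB hconc x ζ).1 m)⟩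
  obtain ⟨j, hj⟩ := (mLe_inl_inr_iff hCF).1 h
  obtain ⟨m, hm⟩ := exists_ppSeq_concB_dvd hCF hconc x ζ j
  exact ⟨m, hj.trans hm⟩

lemma concB_mono (hCF : ∀ x : Heap I, ∃! c : ℕ → Cl I, CFprop I c x)
    (hconc : ∀ (x : Heap I) (ξ : Bnd I), ∃ ζ : Bnd I, IsConc x ξ (.inr ζ))
    (x : Heap I) {ζ ζ' : Bnd I} (h : mLe (.inr ζ) (.inr ζ')) :
    mLe (.inr (concB x ζ)) (.inr (concB x ζ')) :=
  (isConc_concB hconc x ζ).2 _ fun m =>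
    (mLe_inl_concB_iff hCF hconc).2 ⟨m, mul_dvd_mul_left x (h m)⟩

end Concatenation

section Iterates

variable {I : S → S → Prop} {V : Bnd I → MB I} {n : ℕ} {ξ : Bnd I} {x : Heap I}

lemma iter_succ_of_inr {η : Bnd I} (h : iter V n ξ = .inr η) : iter V (n + 1) ξ = .inr ξ := by
  rw [iter, h]

lemma iter_succ_of_inl_inl {y : Heap I} (h : iter V n ξ = .inl x) (hy : V (subB ξ x) = .inl y) :
    iter V (n + 1) ξ = .inl (x * y) := by
  rw [iter, h]
  dsimp only
  rw [hy]

lemma iter_succ_of_inl_inr {ζ : Bnd I} (h : iter V n ξ = .inl x) (hζ : V (subB ξ x) = .inr ζ) :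
    iter V (n + 1) ξ = .inr (concB x ζ) := by
  rw [iter, h]
  dsimp only
  rw [hζ]

lemma isAST_iter_zero (hCF : ∀ x : Heap I, ∃! c : ℕ → Cl I, CFprop I c x) : IsAST (iter V 0) :=
  ⟨fun _ n => dvd_trans (ppSeq_cf_dvd hCF 1 n) (one_dvd _), fun _ _ _ _ _ => rfl⟩

variable [Fintype S] [Std.Symm I] [Std.Irrefl I] {n : ℕ}

lemma iter_succ_le (hCF : ∀ x : Heap I, ∃! c : ℕ → Cl I, CFprop I c x)
    (hconc : ∀ (x : Heap I) (ξ : Bnd I), ∃ ζ : Bnd I, IsConc x ξ (.inr ζ))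
    (hsubEx : ∀ (x : Heap I) (ξ : Bnd I), ξ ∈ cyl x → ∃ ζ : Bnd I, concB x ζ = ξ)
    (hV : ∀ ξ, mLe (V ξ) (.inr ξ)) (hn : ∀ ξ, mLe (iter V n ξ) (.inr ξ)) (ξ : Bnd I) :
    mLe (iter V (n + 1) ξ) (.inr ξ) := by
  rcases hit : iter V n ξ with x | η
  · have hξ : concB x (subB ξ x) = ξ := concB_subB hsubEx (hit ▸ hn ξ)
    rcases hVx : V (subB ξ x) with y | ζ
    · rw [iter_succ_of_inl_inl hit hVx, ← hξ, mLe_inl_concB_iff hCF hconc]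
      obtain ⟨m, hm⟩ := (mLe_inl_inr_iff hCF).1 (hVx ▸ hV (subB ξ x))
      exact ⟨m, mul_dvd_mul_left x hm⟩
    · rw [iter_succ_of_inl_inr hit hVx]
      have h := concB_mono hCF hconc x (hVx ▸ hV (subB ξ x))
      rwa [hξ] at h
  · rw [iter_succ_of_inr hit]
    exact mLe_refl _

lemma iter_succ_eq_of_mLe (hCF : ∀ x : Heap I, ∃! c : ℕ → Cl I, CFprop I c x)
    (hconc : ∀ (x : Heap I) (ξ : Bnd I), ∃ ζ : Bnd I, IsConc x ξ (.inr ζ))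
    (hsubEx : ∀ (x : Heap I) (ξ : Bnd I), ξ ∈ cyl x → ∃ ζ : Bnd I, concB x ζ = ξ)
    (hV : IsAST V) (hn : IsAST (iter V n)) {ξ ξ' : Bnd I} {w : Heap I}
    (hw : iter V (n + 1) ξ = .inl w) (hle : mLe (.inl w) (.inr ξ')) :
    iter V (n + 1) ξ' = iter V (n + 1) ξ := by
  rcases hit : iter V n ξ with x | η
  · rcases hVx : V (subB ξ x) with y | ζ
    · rw [iter_succ_of_inl_inl hit hVx] at hw ⊢
      obtain rfl := Sum.inl_injective hw
      have hit' : iter V n ξ' = .inl x :=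
        (hn.2 ξ ξ' x hit (mLe_inl_of_dvd hCF (dvd_mul_right x y) hle)).trans hit
      have hξ' : concB x (subB ξ' x) = ξ' := concB_subB hsubEx (hit' ▸ hn.1 ξ')
      rw [← hξ', mLe_inl_concB_iff hCF hconc] at hle
      obtain ⟨m, hm⟩ := hle
      have hy : mLe (.inl y) (.inr (subB ξ' x)) :=
        (mLe_inl_inr_iff hCF).2 ⟨m, Heap.dvd_of_mul_dvd_mul_left hm⟩
      rw [iter_succ_of_inl_inl hit' ((hV.2 _ _ y hVx hy).trans hVx)]
    · rw [iter_succ_of_inl_inr hit hVx] at hw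
      cases hw
  · rw [iter_succ_of_inr hit] at hw
    cases hw

lemma isAST_iter_succ (hCF : ∀ x : Heap I, ∃! c : ℕ → Cl I, CFprop I c x)
    (hconc : ∀ (x : Heap I) (ξ : Bnd I), ∃ ζ : Bnd I, IsConc x ξ (.inr ζ))
    (hsubEx : ∀ (x : Heap I) (ξ : Bnd I), ξ ∈ cyl x → ∃ ζ : Bnd I, concB x ζ = ξ)
    (hV : IsAST V) (hn : IsAST (iter V n)) : IsAST (iter V (n + 1)) :=
  ⟨iter_succ_le hCF hconc hsubEx hV.1 hn.1,
    fun _ _ _ hw hle => iter_succ_eq_of_mLe hCF hconc hsubEx hV hn hw hle⟩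

end Iterates

theorem iterated_AST_isAST_general
    {S : Type} [Fintype S] (I : S → S → Prop)
    (hsymm : ∀ a b : S, I a b → I b a)
    (hirr : ∀ a : S, ¬ I a a)
    (hCF : ∀ x : Heap I, ∃! c : ℕ → Cl I, CFprop I c x)
    (hconc : ∀ (x : Heap I) (ξ : Bnd I), ∃ ζ : Bnd I, IsConc x ξ (Sum.inr ζ))
    (hsubEx : ∀ (x : Heap I) (ξ : Bnd I), ξ ∈ cyl x → ∃ ζ : Bnd I, concB x ζ = ξ)
    (V : Bnd I → MB I) (hV : IsAST V) :
    ∀ n : ℕ, IsAST (iter V n) := by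
  have : Std.Symm I := ⟨hsymm⟩
  have : Std.Irrefl I := ⟨hirr⟩
  intro n
  induction n with
  | zero => exact isAST_iter_zero hCF
  | succ n ih => exact isAST_iter_succ hCF hconc hsubEx hV ih

theorem iterated_AST_isAST
    {S : Type} [Fintype S] [DecidableEq S] (I : S → S → Prop)
    (hsymm : ∀ a b : S, I a b → I b a)
    (hirr : ∀ a : S, ¬ I a a)
    (hconn : ∀ a b : S, Relation.ReflTransGen (fun x y : S => x ≠ y ∧ ¬ I x y) a b)
    (hcard : 1 < Fintype.card S)
    (hCF : ∀ x : Heap I, ∃! c : ℕ → Cl I, CFprop I c x)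
    (hconc : ∀ (x : Heap I) (ξ : Bnd I), ∃ ζ : Bnd I, IsConc x ξ (Sum.inr ζ))
    (hconcInj : ∀ (x : Heap I) (ζ ζ' : Bnd I), concB x ζ = concB x ζ' → ζ = ζ')
    (hsubEx : ∀ (x : Heap I) (ξ : Bnd I), ξ ∈ cyl x → ∃ ζ : Bnd I, concB x ζ = ξ)
    (V : Bnd I → MB I) (hV : IsAST V) :
    ∀ n : ℕ, IsAST (iter V n) :=
  iterated_AST_isAST_general I hsymm hirr hCF hconc hsubEx V hV

end HeapPaper
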